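/- arXiv:2001.07673 — 3 statements merged into one kernel-verified Lean document; each statement's English description precedes it below -/
import Mathlib

section
/- Let y*¹, y*² be minimizers of J[μ,g¹] and J[μ,g²] respectively, where J[μ,g](y) = (1/(2s))‖Ly - g‖²_{H₁} + (1/2)‖By - μ‖²_{H₂} with L, B linear. Then y := y*¹ - y*² satisfies (1/s)‖Ly‖² + ‖By‖² = (1/s)⟨g¹ - g², Ly⟩, and consequently (1/2)‖Ly‖² + s‖By‖² ≤ 2‖g¹ - g²‖². -/
/-!
A minimizer of the quadratic functional `J[μ,g]` has vanishing first variation in every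
direction, since `t ↦ J(y + t v)` is a quadratic polynomial minimized at `t = 0`. Subtracting
the two Euler–Lagrange equations in the direction `y*¹ - y*²` gives the energy identity;
multiplying it by `s` and expanding `0 ≤ ‖(g¹ - g²) - Ly‖²` turns it into the estimate.
-/

open scoped RealInnerProductSpace

section Tikhonov

variable {V H₁ H₂ : Type*} [AddCommGroup V] [Module ℝ V]
  [NormedAddCommGroup H₁] [InnerProductSpace ℝ H₁]
  [NormedAddCommGroup H₂] [InnerProductSpace ℝ H₂]
  (L : V →ₗ[ℝ] H₁) (B : V →ₗ[ℝ] H₂) (μ : H₂) (s : ℝ)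

/-- The functional `J[μ,g]` of the paper. -/
noncomputable def tikhonovFunctional (g : H₁) (y : V) : ℝ :=
  (1/(2*s)) * ‖L y - g‖ ^ 2 + (1/2) * ‖B y - μ‖ ^ 2

theorem tikhonovFunctional_add_smul (g : H₁) (y v : V) (t : ℝ) :
    tikhonovFunctional L B μ s g (y + t • v) =
      tikhonovFunctional L B μ s g y
        + t * ((1/s) * ⟪L y - g, L v⟫ + ⟪B y - μ, B v⟫)
        + t ^ 2 * ((1/(2*s)) * ‖L v‖ ^ 2 + (1/2) * ‖B v‖ ^ 2) := by
  have hL : L (y + t • v) - g = (L y - g) + t • L v := by simp only [map_add, map_smul]; abel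
  have hB : B (y + t • v) - μ = (B y - μ) + t • B v := by simp only [map_add, map_smul]; abel
  simp only [tikhonovFunctional, hL, hB, norm_add_sq_real, real_inner_smul_right, norm_smul,
    Real.norm_eq_abs, mul_pow, sq_abs]
  ring

theorem tikhonovFunctional_firstVariation_eq_zero {g : H₁} {y₀ : V}
    (hmin : ∀ y, tikhonovFunctional L B μ s g y₀ ≤ tikhonovFunctional L B μ s g y) (v : V) :
    (1/s) * ⟪L y₀ - g, L v⟫ + ⟪B y₀ - μ, B v⟫ = 0 := by
  set D := (1/s) * ⟪L y₀ - g, L v⟫ + ⟪B y₀ - μ, B v⟫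
  set Q := (1/(2*s)) * ‖L v‖ ^ 2 + (1/2) * ‖B v‖ ^ 2
  have hquad : ∀ t : ℝ, 0 ≤ Q * (t * t) + D * t + 0 := fun t => by
    have := hmin (y₀ + t • v)
    rw [tikhonovFunctional_add_smul] at this
    linear_combination this
  have hdiscr : D ^ 2 ≤ 0 := by simpa [discrim] using discrim_le_zero hquad
  exact pow_eq_zero_iff two_ne_zero |>.mp (le_antisymm hdiscr (sq_nonneg D))

theorem tikhonovFunctional_energy_identity {g₁ g₂ : H₁} {y₁ y₂ : V}
    (hmin₁ : ∀ y, tikhonovFunctional L B μ s g₁ y₁ ≤ tikhonovFunctional L B μ s g₁ y)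
    (hmin₂ : ∀ y, tikhonovFunctional L B μ s g₂ y₂ ≤ tikhonovFunctional L B μ s g₂ y) :
    (1/s) * ‖L (y₁ - y₂)‖ ^ 2 + ‖B (y₁ - y₂)‖ ^ 2 = (1/s) * ⟪g₁ - g₂, L (y₁ - y₂)⟫ := by
  set v := y₁ - y₂
  have h₁ := tikhonovFunctional_firstVariation_eq_zero L B μ s hmin₁ v
  have h₂ := tikhonovFunctional_firstVariation_eq_zero L B μ s hmin₂ v
  have hL : ⟪L y₁ - g₁, L v⟫ - ⟪L y₂ - g₂, L v⟫ = ‖L v‖ ^ 2 - ⟪g₁ - g₂, L v⟫ := by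
    rw [← inner_sub_left, ← real_inner_self_eq_norm_sq, ← inner_sub_left, map_sub]
    congr 1
    abel
  have hB : ⟪B y₁ - μ, B v⟫ - ⟪B y₂ - μ, B v⟫ = ‖B v‖ ^ 2 := by
    rw [← inner_sub_left, ← real_inner_self_eq_norm_sq, map_sub, sub_sub_sub_cancel_right]
  linear_combination h₁ - h₂ - (1/s) * hL - hB

end Tikhonov

theorem half_norm_sq_add_le_half_norm_sq {H : Type*} [NormedAddCommGroup H]
    [InnerProductSpace ℝ H] {x g : H} {c : ℝ} (h : ‖x‖ ^ 2 + c = ⟪g, x⟫) :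
    (1/2) * ‖x‖ ^ 2 + c ≤ (1/2) * ‖g‖ ^ 2 := by
  have := norm_sub_sq_real g x
  nlinarith [sq_nonneg ‖g - x‖]

/-- If `y*¹`, `y*²` minimize `J[μ,g¹]`, `J[μ,g²]` respectively, then
`y = y*¹ - y*²` satisfies `(1/s)‖Ly‖² + ‖By‖² = (1/s)⟨g¹ - g², Ly⟩`, and
consequently `(1/2)‖Ly‖² + s‖By‖² ≤ 2‖g¹ - g²‖²`. -/
theorem stmt_8 {V H₁ H₂ : Type*} [AddCommGroup V] [Module ℝ V]
    [NormedAddCommGroup H₁] [InnerProductSpace ℝ H₁]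
    [NormedAddCommGroup H₂] [InnerProductSpace ℝ H₂]
    (L : V →ₗ[ℝ] H₁) (B : V →ₗ[ℝ] H₂) (μ : H₂) (g₁ g₂ : H₁) (s : ℝ) (hs : 0 < s)
    (y₁ y₂ : V)
    (hmin₁ : ∀ y : V,
      (1/(2*s)) * ‖L y₁ - g₁‖ ^ 2 + (1/2) * ‖B y₁ - μ‖ ^ 2 ≤
        (1/(2*s)) * ‖L y - g₁‖ ^ 2 + (1/2) * ‖B y - μ‖ ^ 2)
    (hmin₂ : ∀ y : V,
      (1/(2*s)) * ‖L y₂ - g₂‖ ^ 2 + (1/2) * ‖B y₂ - μ‖ ^ 2 ≤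
        (1/(2*s)) * ‖L y - g₂‖ ^ 2 + (1/2) * ‖B y - μ‖ ^ 2) :
    (1/s) * ‖L (y₁ - y₂)‖ ^ 2 + ‖B (y₁ - y₂)‖ ^ 2 =
        (1/s) * ⟪g₁ - g₂, L (y₁ - y₂)⟫ ∧
    (1/2) * ‖L (y₁ - y₂)‖ ^ 2 + s * ‖B (y₁ - y₂)‖ ^ 2 ≤ 2 * ‖g₁ - g₂‖ ^ 2 := by
  have henergy := tikhonovFunctional_energy_identity L B μ s hmin₁ hmin₂
  refine ⟨henergy, ?_⟩
  have hscaled : ‖L (y₁ - y₂)‖ ^ 2 + s * ‖B (y₁ - y₂)‖ ^ 2 = ⟪g₁ - g₂, L (y₁ - y₂)⟫ := by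
    field_simp at henergy
    linarith
  linarith [half_norm_sq_add_le_half_norm_sq hscaled, sq_nonneg ‖g₁ - g₂‖]
end

section
/- Let w : Ω × [-T,T] → ℝ with w(·,0) = 0, let L₀w ∈ C(Ω × [-T,T]) suitably integrable, and suppose the weight φ_λ satisfies ∂ₜφ_λ < 0 on (0,T) and ∂ₜφ_λ > 0 on (-T,0). Then ∫_{-T}^{T}∫_Ω ĉ² e^{sφ_λ} ∂ₜ|L₀w|² dx dt ≥ -2c² ∫_Ω |L₀w(x,0)|² e^{sφ_λ(x,0)} dx, where ĉ² denotes the odd extension in t of the constant c², i.e. ĉ²(t) = c² for t > 0 and -c² for t < 0. -/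
/-!
Write `v = |G|²`, `p = ψ` and split the time integral at `t = 0`. Integrating by parts,
`∫_0^T p v' = p(T) v(T) - p(0) v(0) - ∫_0^T p' v ≥ -p(0) v(0)` because `p' ≤ 0 ≤ v` there, and
symmetrically `∫_{-T}^0 p v' ≤ p(0) v(0)` because `p' ≥ 0` there. With the weights `c²` and `-c²`
the two halves together are `≥ -2c² p(0) v(0)`; integrating over space gives the claim.
-/

open MeasureTheory Set
open scoped Interval

section IntegrationByParts

variable {p v : ℝ → ℝ} {a b : ℝ}

theorem integral_mul_deriv_eq_of_contDiff (hp : ContDiff ℝ 1 p) (hv : ContDiff ℝ 1 v) :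
    ∫ t in a..b, p t * deriv v t = p b * v b - p a * v a - ∫ t in a..b, deriv p t * v t :=
  intervalIntegral.integral_mul_deriv_eq_deriv_mul
    (fun t _ => (hp.differentiable one_ne_zero t).hasDerivAt)
    (fun t _ => (hv.differentiable one_ne_zero t).hasDerivAt)
    ((hp.continuous_deriv le_rfl).intervalIntegrable a b)
    ((hv.continuous_deriv le_rfl).intervalIntegrable a b)

theorem integral_nonneg_of_nonneg_on_Ioo {f : ℝ → ℝ} (hab : a ≤ b)
    (hf : ∀ t ∈ Ioo a b, 0 ≤ f t) : 0 ≤ ∫ t in a..b, f t :=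
  intervalIntegral.integral_nonneg_of_ae_restrict hab <| by
    rw [← Measure.restrict_congr_set Ioo_ae_eq_Icc]
    filter_upwards [ae_restrict_mem measurableSet_Ioo] using hf

theorem neg_mul_le_integral_mul_deriv_of_deriv_nonpos (hab : a ≤ b)
    (hp : ContDiff ℝ 1 p) (hv : ContDiff ℝ 1 v) (hv₀ : ∀ t, 0 ≤ v t) (hpb : 0 ≤ p b)
    (hp' : ∀ t ∈ Ioo a b, deriv p t ≤ 0) :
    -(p a * v a) ≤ ∫ t in a..b, p t * deriv v t := by
  have hI : 0 ≤ ∫ t in a..b, -(deriv p t * v t) :=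
    integral_nonneg_of_nonneg_on_Ioo hab fun t ht =>
      neg_nonneg.2 (mul_nonpos_of_nonpos_of_nonneg (hp' t ht) (hv₀ t))
  rw [intervalIntegral.integral_neg] at hI
  rw [integral_mul_deriv_eq_of_contDiff hp hv]
  nlinarith [mul_nonneg hpb (hv₀ b)]

theorem integral_mul_deriv_le_of_deriv_nonneg (hab : a ≤ b)
    (hp : ContDiff ℝ 1 p) (hv : ContDiff ℝ 1 v) (hv₀ : ∀ t, 0 ≤ v t) (hpa : 0 ≤ p a)
    (hp' : ∀ t ∈ Ioo a b, 0 ≤ deriv p t) :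
    ∫ t in a..b, p t * deriv v t ≤ p b * v b := by
  have hI : 0 ≤ ∫ t in a..b, deriv p t * v t :=
    integral_nonneg_of_nonneg_on_Ioo hab fun t ht => mul_nonneg (hp' t ht) (hv₀ t)
  rw [integral_mul_deriv_eq_of_contDiff hp hv]
  nlinarith [mul_nonneg hpa (hv₀ a)]

end IntegrationByParts

theorem integral_eq_const_mul_of_eqOn_uIoc {f g : ℝ → ℝ} {a b : ℝ} (k : ℝ)
    (h : EqOn f (fun t => k * g t) (Ι a b)) :
    ∫ t in a..b, f t = k * ∫ t in a..b, g t := by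
  rw [← intervalIntegral.integral_const_mul]
  exact intervalIntegral.integral_congr_ae (Filter.Eventually.of_forall h)

theorem intervalIntegrable_of_eqOn_uIoc {f g : ℝ → ℝ} {a b : ℝ} (k : ℝ)
    (hg : IntervalIntegrable g volume a b) (h : EqOn f (fun t => k * g t) (Ι a b)) :
    IntervalIntegrable f volume a b := by
  rw [intervalIntegrable_iff] at hg ⊢
  exact IntegrableOn.congr_fun (hg.const_mul k) h.symm measurableSet_uIoc

theorem integral_oddExtension_mul (k : ℝ) {T : ℝ} (hT : 0 ≤ T) {f : ℝ → ℝ}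
    (hf : IntervalIntegrable f volume (-T) T) :
    ∫ t in (-T)..T, (if 0 < t then k else -k) * f t =
      k * (∫ t in 0..T, f t) - k * ∫ t in (-T)..0, f t := by
  have hneg : EqOn (fun t => (if 0 < t then k else -k) * f t) (fun t => -k * f t) (Ι (-T) 0) :=
    fun t ht => by
      rw [uIoc_of_le (by linarith)] at ht
      simp only [if_neg (not_lt.2 ht.2)]
  have hpos : EqOn (fun t => (if 0 < t then k else -k) * f t) (fun t => k * f t) (Ι 0 T) :=
    fun t ht => by
      rw [uIoc_of_le hT] at ht
      simp only [if_pos ht.1]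
  have h₀ : (0 : ℝ) ∈ [[-T, T]] := by
    rw [uIcc_of_le (by linarith)]
    exact ⟨by linarith, hT⟩
  have hf₁ : IntervalIntegrable f volume (-T) 0 := hf.mono_set (uIcc_subset_uIcc_left h₀)
  have hf₂ : IntervalIntegrable f volume 0 T := hf.mono_set (uIcc_subset_uIcc_right h₀)
  have hI₁ := integral_eq_const_mul_of_eqOn_uIoc _ hneg
  have hI₂ := integral_eq_const_mul_of_eqOn_uIoc _ hpos
  rw [← intervalIntegral.integral_add_adjacent_intervals
    (intervalIntegrable_of_eqOn_uIoc _ hf₁ hneg) (intervalIntegrable_of_eqOn_uIoc _ hf₂ hpos),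
    hI₁, hI₂]
  ring

theorem neg_two_mul_le_integral_oddExtension_mul_deriv (c : ℝ) {T : ℝ} (hT : 0 ≤ T)
    {p v : ℝ → ℝ} (hp : ContDiff ℝ 1 p) (hv : ContDiff ℝ 1 v) (hv₀ : ∀ t, 0 ≤ v t)
    (hp₀ : ∀ t, 0 < p t)
    (hp'₁ : ∀ t ∈ Ioo 0 T, deriv p t < 0) (hp'₂ : ∀ t ∈ Ioo (-T) 0, 0 < deriv p t) :
    -2 * c ^ 2 * (v 0 * p 0) ≤
      ∫ t in (-T)..T, (if 0 < t then c ^ 2 else -c ^ 2) * p t * deriv v t := by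
  have hpv : IntervalIntegrable (fun t => p t * deriv v t) volume (-T) T :=
    (hp.continuous.mul (hv.continuous_deriv le_rfl)).intervalIntegrable _ _
  have hright := neg_mul_le_integral_mul_deriv_of_deriv_nonpos hT hp hv hv₀ (hp₀ T).le
    fun t ht => (hp'₁ t ht).le
  have hleft := integral_mul_deriv_le_of_deriv_nonneg (by linarith) hp hv hv₀ (hp₀ (-T)).le
    fun t ht => (hp'₂ t ht).le
  simp_rw [mul_assoc]
  rw [integral_oddExtension_mul _ hT hpv]
  have hc : 0 ≤ c ^ 2 := sq_nonneg c
  linear_combination mul_le_mul_of_nonneg_left hright hc + mul_le_mul_of_nonneg_left hleft hc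

/-- Let `G x t = (L₀w)(x,t)` with `w(·,0) = 0` so that `G x 0` is the
relevant initial value, and let `ψ x t = e^{sφ_λ(x,t)}` satisfy `∂ₜψ < 0` on
`(0,T)` and `∂ₜψ > 0` on `(-T,0)`. Then, with `ĉ²(t) = c²` for `t > 0` and `-c²`
for `t < 0`,
`∫_{-T}^{T}∫_Ω ĉ² ψ ∂ₜ|G|² ≥ -2c² ∫_Ω |G(x,0)|² ψ(x,0)`. -/
theorem stmt_14 {α : Type*} [MeasurableSpace α] (μ : Measure α)
    (c T : ℝ) (hT : 0 < T) (G ψ : α → ℝ → ℝ)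
    (hG : ∀ x, ContDiff ℝ 1 (G x)) (hψ : ∀ x, ContDiff ℝ 1 (ψ x))
    (hψpos : ∀ x t, 0 < ψ x t)
    (hsign₁ : ∀ x, ∀ t ∈ Set.Ioo (0:ℝ) T, deriv (ψ x) t < 0)
    (hsign₂ : ∀ x, ∀ t ∈ Set.Ioo (-T) (0:ℝ), 0 < deriv (ψ x) t)
    (hint : Integrable (fun x => ∫ t in (-T)..T,
      (if 0 < t then c ^ 2 else -c ^ 2) * ψ x t *
        deriv (fun τ => (G x τ) ^ 2) t) μ)
    (hint0 : Integrable (fun x => (G x 0) ^ 2 * ψ x 0) μ) :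
    -2 * c ^ 2 * ∫ x, (G x 0) ^ 2 * ψ x 0 ∂μ ≤
      ∫ x, (∫ t in (-T)..T,
        (if 0 < t then c ^ 2 else -c ^ 2) * ψ x t *
          deriv (fun τ => (G x τ) ^ 2) t) ∂μ := by
  rw [← MeasureTheory.integral_const_mul]
  exact integral_mono (hint0.const_mul _) hint fun x =>
    neg_two_mul_le_integral_oddExtension_mul_deriv c hT.le (hψ x) ((hG x).pow 2)
      (fun t => sq_nonneg (G x t)) (hψpos x) (hsign₁ x) (hsign₂ x)
end

section
/- If F : [0,T] → ℝ is differentiable with F(t) = ‖L₀u(t)‖² and F'(t) ≤ K for a.e. t where K = (2/c²)sup_τ(‖f(τ)‖² + ‖γu_{tt}(τ)‖²)-type bound, combined with the energy bound ‖γu_{tt}(τ)‖²_{L²} ≤ C(‖f‖²_{L²L²} + Ē(0)), then using |Δu| ≤ |L₀u| + |u_{tt}| pointwise in L², ‖Δu(t)‖²_{L²} ≤ C'(‖f‖²_{L²(0,T;L²)} + Ē(0) + ‖Δu₀‖²_{L²}) for all t ∈ [0,T]. -/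
/-!
Since `Δu = u_tt - L₀u`, we have `‖Δu‖² ≤ 2‖u_tt‖² + 2‖L₀u‖²`. The first term is controlled by
the energy bound. For the second, the integrated bound on `‖L₀u‖²` is estimated by
enlarging `∫₀ᵗ ‖f‖²` to `∫₀ᵀ ‖f‖²` and bounding `∫₀ᵗ ‖γu_tt‖²` by `T` times the uniform
energy bound on `‖γu_tt‖²`.
-/

open MeasureTheory Set

theorem norm_sub_sq_le_two_mul {E : Type*} [SeminormedAddCommGroup E] (a b : E) :
    ‖a - b‖ ^ 2 ≤ 2 * (‖a‖ ^ 2 + ‖b‖ ^ 2) :=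
  (pow_le_pow_left₀ (norm_nonneg _) (norm_sub_le a b) 2).trans add_sq_le

namespace intervalIntegral

theorem integral_le_sub_mul_of_le_const {g : ℝ → ℝ} {a b M : ℝ} (hab : a ≤ b)
    (hg : IntervalIntegrable g volume a b) (hgM : ∀ x ∈ Icc a b, g x ≤ M) :
    ∫ x in a..b, g x ≤ (b - a) * M :=
  calc ∫ x in a..b, g x ≤ ∫ _ in a..b, M := integral_mono_on hab hg intervalIntegrable_const hgM
    _ = (b - a) * M := by rw [integral_const, smul_eq_mul]

theorem integral_add_le_of_nonneg_of_le_const {f g : ℝ → ℝ} {a b t M : ℝ}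
    (hf0 : ∀ x, 0 ≤ f x) (hfi : IntervalIntegrable f volume a b)
    (hgi : IntervalIntegrable g volume a b) (hgM : ∀ x ∈ Icc a b, g x ≤ M) (hM : 0 ≤ M)
    (ht : t ∈ Icc a b) :
    ∫ x in a..t, (f x + g x) ≤ (∫ x in a..b, f x) + (b - a) * M := by
  obtain ⟨hat, htb⟩ := ht
  have hsub : uIcc a t ⊆ uIcc a b := uIcc_subset_uIcc_left (mem_uIcc_of_le hat htb)
  rw [integral_add (hfi.mono_set hsub) (hgi.mono_set hsub)]
  gcongr
  · exact integral_mono_interval le_rfl hat htb (Filter.Eventually.of_forall hf0) hfi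
  · calc ∫ x in a..t, g x ≤ (t - a) * M :=
          integral_le_sub_mul_of_le_const hat (hgi.mono_set hsub)
            fun x hx => hgM x ⟨hx.1, hx.2.trans htb⟩
      _ ≤ (b - a) * M := by gcongr

end intervalIntegral

theorem stmt_19_general {H : Type*} [NormedAddCommGroup H] [InnerProductSpace ℝ H]
    (c T C E0 Du0sq : ℝ) (hT : 0 < T) (hC : 0 < C)
    (hE0 : 0 ≤ E0) (hDu0 : 0 ≤ Du0sq)
    (Lu utt f k : ℝ → H)
    (hfint : IntervalIntegrable (fun t => ‖f t‖ ^ 2) volume 0 T)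
    (hkint : IntervalIntegrable (fun t => ‖k t‖ ^ 2) volume 0 T)
    (hLu : ∀ t ∈ Set.Icc (0:ℝ) T,
      ‖Lu t‖ ^ 2 ≤ ‖Lu 0‖ ^ 2 +
        (2 / c ^ 2) * ∫ τ in (0:ℝ)..t, (‖f τ‖ ^ 2 + ‖k τ‖ ^ 2))
    (hk : ∀ τ ∈ Set.Icc (0:ℝ) T,
      ‖k τ‖ ^ 2 ≤ C * ((∫ τ in (0:ℝ)..T, ‖f τ‖ ^ 2) + E0))
    (hutt : ∀ τ ∈ Set.Icc (0:ℝ) T,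
      ‖utt τ‖ ^ 2 ≤ C * ((∫ τ in (0:ℝ)..T, ‖f τ‖ ^ 2) + E0))
    (hLu0 : ‖Lu 0‖ ^ 2 ≤ C * (E0 + Du0sq)) :
    ∃ C' > 0, ∀ t ∈ Set.Icc (0:ℝ) T,
      ‖utt t - Lu t‖ ^ 2 ≤
        C' * ((∫ τ in (0:ℝ)..T, ‖f τ‖ ^ 2) + E0 + Du0sq) := by
  set F := ∫ τ in (0:ℝ)..T, ‖f τ‖ ^ 2
  have hF : 0 ≤ F := intervalIntegral.integral_nonneg hT.le fun τ _ => by positivity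
  set S := F + E0 + Du0sq
  refine ⟨4 * C + 4 / c ^ 2 * (1 + T * C), by positivity, fun t ht => ?_⟩
  have hLut : ‖Lu t‖ ^ 2 ≤ C * (E0 + Du0sq) + 2 / c ^ 2 * (F + T * (C * (F + E0))) := by
    refine (hLu t ht).trans (add_le_add hLu0 (mul_le_mul_of_nonneg_left ?_ (by positivity)))
    simpa using intervalIntegral.integral_add_le_of_nonneg_of_le_const
      (fun τ => sq_nonneg ‖f τ‖) hfint hkint hk (by positivity) ht
  calc ‖utt t - Lu t‖ ^ 2 ≤ 2 * (‖utt t‖ ^ 2 + ‖Lu t‖ ^ 2) := norm_sub_sq_le_two_mul _ _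
    _ ≤ 2 * (C * (F + E0) + (C * (E0 + Du0sq) + 2 / c ^ 2 * (F + T * (C * (F + E0))))) := by
      gcongr
      exact hutt t ht
    _ ≤ 2 * (C * S + (C * S + 2 / c ^ 2 * (S + T * (C * S)))) := by
      gcongr <;> simp only [S] <;> linarith
    _ = (4 * C + 4 / c ^ 2 * (1 + T * C)) * S := by ring

/-- Bound of the Laplacian of the MGT solution. With `Lu = L₀u`,
`utt = u_tt` and `k = γu_tt` as curves in `L²(Ω)`, suppose the integrated bound
`‖Lu(t)‖² ≤ ‖Lu(0)‖² + (2/c²)∫₀ᵗ(‖f‖² + ‖k‖²)` holds, together with the energy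
bounds `‖k(τ)‖² ≤ C(‖f‖²_{L²L²} + Ē(0))`, `‖utt(τ)‖² ≤ C(‖f‖²_{L²L²} + Ē(0))`
and `‖Lu(0)‖² ≤ C(Ē(0) + ‖Δu₀‖²)`. Then, since `Δu = u_tt - L₀u`,
`‖Δu(t)‖² ≤ C'(‖f‖²_{L²(0,T;L²)} + Ē(0) + ‖Δu₀‖²)` on `[0,T]`. -/
theorem stmt_19 {H : Type*} [NormedAddCommGroup H] [InnerProductSpace ℝ H]
    (c T C E0 Du0sq : ℝ) (hc : c ≠ 0) (hT : 0 < T) (hC : 0 < C)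
    (hE0 : 0 ≤ E0) (hDu0 : 0 ≤ Du0sq)
    (Lu utt f k : ℝ → H)
    (hfint : IntervalIntegrable (fun t => ‖f t‖ ^ 2) volume 0 T)
    (hkint : IntervalIntegrable (fun t => ‖k t‖ ^ 2) volume 0 T)
    (hLu : ∀ t ∈ Set.Icc (0:ℝ) T,
      ‖Lu t‖ ^ 2 ≤ ‖Lu 0‖ ^ 2 +
        (2 / c ^ 2) * ∫ τ in (0:ℝ)..t, (‖f τ‖ ^ 2 + ‖k τ‖ ^ 2))
    (hk : ∀ τ ∈ Set.Icc (0:ℝ) T,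
      ‖k τ‖ ^ 2 ≤ C * ((∫ τ in (0:ℝ)..T, ‖f τ‖ ^ 2) + E0))
    (hutt : ∀ τ ∈ Set.Icc (0:ℝ) T,
      ‖utt τ‖ ^ 2 ≤ C * ((∫ τ in (0:ℝ)..T, ‖f τ‖ ^ 2) + E0))
    (hLu0 : ‖Lu 0‖ ^ 2 ≤ C * (E0 + Du0sq)) :
    ∃ C' > 0, ∀ t ∈ Set.Icc (0:ℝ) T,
      ‖utt t - Lu t‖ ^ 2 ≤
        C' * ((∫ τ in (0:ℝ)..T, ‖f τ‖ ^ 2) + E0 + Du0sq) :=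
  stmt_19_general c T C E0 Du0sq hT hC hE0 hDu0 Lu utt f k hfint hkint hLu hk hutt hLu0
end
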